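/- Let (a_n) be the Thue–Morse sequence a_n = (-1)^{s_2(n)}. For every positive integer q, define the q-stuttered Thue–Morse sequence T_q(a)_n = a_{⌊n/q⌋}. Then the ratio (∏_{n=0}^∞ (1 + T_{2q}(a)_n/(2n+1))) / (∏_{n=0}^∞ (1 + T_q(a)_n/(2n+1))) equals √2, both infinite products being convergent. -/

import Mathlib

/-!
Write `u n = T_q(a)_n / (2n + 1)`. On the block `2qk ≤ n < 2q(k + 1)` the stuttered sequence
equals `a_k` on the first half and `-a_k` on the second, so the block sums of `u` are
`O(1/k²)` and `∑ u n` converges; as `∑ u n ^ 2 < ∞` too, `∑ log (1 + u n)` converges and the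
product has a positive limit. In the `2q`-product the factors `n = 2m` and `2m + 1` both carry
`t = T_q(a)_m`, and for `t = ±1`
`(1 + t/(4m+1)) (1 + t/(4m+3)) = (1 + t/(2m+1)) · (4m+2)² / ((4m+1)(4m+3))`.
So the ratio is `∏ (4m+2)² / ((4m+1)(4m+3)) = Γ(1/4) Γ(3/4) / Γ(1/2)² = √2`, by Euler's
limit formula for `Γ` and the reflection formula at `1/4`.
-/

open Real Finset Filter

/-- The ±1-valued Thue–Morse sequence: `a n = (-1)^(binary digit sum of n)`. -/
noncomputable def thueMorse (n : ℕ) : ℝ := (-1) ^ (Nat.digits 2 n).sum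

/-- The `q`-stuttered Thue–Morse sequence: `T_q(a)_n = a_{⌊n/q⌋}`. -/
noncomputable def stutter (q n : ℕ) : ℝ := thueMorse (n / q)

open Topology

lemma sum_range_mul_eq_sum_blocks {M : Type*} [AddCommMonoid M] (f : ℕ → M) (m K : ℕ) :
    ∑ n ∈ range (m * K), f n = ∑ k ∈ range K, ∑ j ∈ range m, f (m * k + j) := by
  induction K with
  | zero => simp
  | succ K ih => rw [mul_add_one, sum_range_add, ih, sum_range_succ]

theorem tendsto_sum_range_of_summable_blocks {f : ℕ → ℝ} {m : ℕ} (hm : 0 < m)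
    (hf : Tendsto f atTop (𝓝 0)) (hB : Summable fun k => ∑ j ∈ range m, f (m * k + j)) :
    Tendsto (fun N => ∑ n ∈ range N, f n) atTop
      (𝓝 (∑' k, ∑ j ∈ range m, f (m * k + j))) := by
  have hdiv : Tendsto (· / m) atTop atTop := Nat.tendsto_div_const_atTop hm.ne'
  have hstart : Tendsto (fun N => m * (N / m)) atTop atTop := hdiv.nsmul_atTop hm
  have hrest : Tendsto (fun N => ∑ j ∈ range (N % m), f (m * (N / m) + j)) atTop (𝓝 0) := by
    refine squeeze_zero_norm (a := fun N => ∑ j ∈ range m, ‖f (m * (N / m) + j)‖)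
      (fun N => (norm_sum_le _ _).trans <| sum_le_sum_of_subset_of_nonneg
        (range_mono (N.mod_lt hm).le) fun _ _ _ => norm_nonneg _) ?_
    simpa using tendsto_finsetSum (range m) fun j _ =>
      hf.norm.comp ((tendsto_add_atTop_nat j).comp hstart)
  have hsplit := (hB.hasSum.tendsto_sum_nat.comp hdiv).add hrest
  rw [add_zero] at hsplit
  refine hsplit.congr fun N => ?_
  conv_rhs => rw [← Nat.div_add_mod N m, sum_range_add, sum_range_mul_eq_sum_blocks]
  rfl

lemma abs_log_one_add_sub_self_le {u : ℝ} (hu : |u| ≤ 1 / 2) :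
    |log (1 + u) - u| ≤ 2 * u ^ 2 := by
  have h := abs_log_sub_add_sum_range_le (x := -u) (by rw [abs_neg]; linarith) 1
  rw [abs_neg, sub_neg_eq_add] at h
  calc |log (1 + u) - u| = |-u + log (1 + u)| := by ring_nf
    _ ≤ |u| ^ 2 / (1 - |u|) := by simpa using h
    _ ≤ |u| ^ 2 / (1 / 2) := by gcongr; linarith
    _ = 2 * u ^ 2 := by rw [sq_abs]; ring

theorem exists_pos_tendsto_prod_one_add {u : ℕ → ℝ} {s : ℝ} (hpos : ∀ n, 0 < 1 + u n)
    (hs : Tendsto (fun N => ∑ n ∈ range N, u n) atTop (𝓝 s)) (hsq : Summable fun n => u n ^ 2) :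
    ∃ P, 0 < P ∧ Tendsto (fun N => ∏ n ∈ range N, (1 + u n)) atTop (𝓝 P) := by
  have hsmall : ∀ᶠ n in atTop, |u n| ≤ 1 / 2 :=
    (hsq.tendsto_atTop_zero.eventually (ge_mem_nhds (by norm_num : (0 : ℝ) < (1 / 2) ^ 2))).mono
      fun _ hn => abs_le_of_sq_le_sq hn (by norm_num)
  have hcorr : Summable fun n => log (1 + u n) - u n :=
    (hsq.mul_left 2).of_norm_bounded_eventually <| Nat.cofinite_eq_atTop ▸
      hsmall.mono fun n hn => abs_log_one_add_sub_self_le hn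
  refine ⟨exp (s + ∑' n, (log (1 + u n) - u n)), exp_pos _, ?_⟩
  refine ((continuous_exp.tendsto _).comp (hs.add hcorr.hasSum.tendsto_sum_nat)).congr
    fun N => ?_
  simp only [Function.comp_apply, ← sum_add_distrib, add_sub_cancel, exp_sum]
  exact prod_congr rfl fun n _ => exp_log (hpos n)

lemma abs_thueMorse (n : ℕ) : |thueMorse n| = 1 := by simp [thueMorse]

lemma thueMorse_sq (n : ℕ) : thueMorse n ^ 2 = 1 := by rw [← sq_abs, abs_thueMorse, one_pow]

lemma thueMorse_zero : thueMorse 0 = 1 := by simp [thueMorse]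

lemma thueMorse_two_mul (k : ℕ) : thueMorse (2 * k) = thueMorse k := by
  rcases Nat.eq_zero_or_pos k with rfl | hk
  · rfl
  · rw [thueMorse, ← zero_add (2 * k), Nat.digits_add 2 one_lt_two 0 k two_pos (.inr hk.ne')]
    simp [thueMorse]

lemma thueMorse_two_mul_add_one (k : ℕ) : thueMorse (2 * k + 1) = -thueMorse k := by
  rw [thueMorse, add_comm, Nat.digits_add 2 one_lt_two 1 k one_lt_two (.inl one_ne_zero)]
  simp [thueMorse, pow_add]

lemma stutter_zero (q : ℕ) : stutter q 0 = 1 := by simp [stutter, thueMorse_zero]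

lemma abs_stutter (q n : ℕ) : |stutter q n| = 1 := abs_thueMorse _

lemma stutter_two_mul_mul_add {q j : ℕ} (k : ℕ) (hj : j < q) :
    stutter q (2 * q * k + j) = thueMorse k := by
  rw [stutter, Nat.div_eq_of_lt_le (k := 2 * k) (by nlinarith) (by nlinarith), thueMorse_two_mul]

lemma stutter_two_mul_mul_add_add {q j : ℕ} (k : ℕ) (hj : j < q) :
    stutter q (2 * q * k + q + j) = -thueMorse k := by
  rw [stutter, Nat.div_eq_of_lt_le (k := 2 * k + 1) (by nlinarith) (by nlinarith),
    thueMorse_two_mul_add_one]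

lemma stutter_two_mul_two_mul (q N : ℕ) : stutter (2 * q) (2 * N) = stutter q N := by
  rw [stutter, stutter, Nat.mul_div_mul_left _ _ two_pos]

lemma stutter_two_mul_two_mul_add_one (q N : ℕ) :
    stutter (2 * q) (2 * N + 1) = stutter q N := by
  rw [stutter, stutter, ← Nat.div_div_eq_div_mul, Nat.mul_add_div two_pos]; rfl

lemma summable_one_div_nat_add_one_sq : Summable fun n : ℕ => 1 / ((n : ℝ) + 1) ^ 2 := by
  simpa using (summable_nat_add_iff 1).2 (Real.summable_one_div_nat_pow.2 one_lt_two)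

lemma abs_div_sub_div_add_le {t x d : ℝ} (ht : |t| = 1) (hx : 0 < x) (hd : 0 ≤ d) :
    |t / x - t / (x + d)| ≤ d / x ^ 2 := by
  have hxd : 0 < x + d := by linarith
  rw [div_sub_div _ _ hx.ne' hxd.ne', show t * (x + d) - x * t = t * d by ring, abs_div, abs_mul,
    ht, abs_of_nonneg hd, abs_of_pos (mul_pos hx hxd), one_mul]
  exact div_le_div_of_nonneg_left hd (by positivity) (by nlinarith)

lemma sum_range_two_mul {M : Type*} [AddCommMonoid M] (f : ℕ → M) (q : ℕ) :
    ∑ j ∈ range (2 * q), f j = ∑ j ∈ range q, (f j + f (q + j)) := by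
  rw [two_mul, sum_range_add, sum_add_distrib]

lemma abs_stutter_div (q n : ℕ) : |stutter q n / (2 * n + 1)| = 1 / (2 * n + 1) := by
  rw [abs_div, abs_stutter, abs_of_pos (by positivity)]

lemma abs_stutter_pair_le {q j : ℕ} (k : ℕ) (hj : j < q) :
    |stutter q (2 * q * k + j) / (2 * ((2 * q * k + j : ℕ) : ℝ) + 1) +
        stutter q (2 * q * k + (q + j)) / (2 * ((2 * q * k + (q + j) : ℕ) : ℝ) + 1)|
      ≤ 2 * q / ((k : ℝ) + 1) ^ 2 := by
  set x : ℝ := 2 * ((2 * q * k + j : ℕ) : ℝ) + 1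
  have hx : (k : ℝ) + 1 ≤ x := by
    have hq : (1 : ℝ) ≤ q := by exact_mod_cast hj.trans_le' (Nat.zero_le j)
    simp only [x]; push_cast; nlinarith
  have hshift : 2 * ((2 * q * k + q + j : ℕ) : ℝ) + 1 = x + 2 * q := by
    simp only [x]; push_cast; ring
  rw [← add_assoc, stutter_two_mul_mul_add k hj, stutter_two_mul_mul_add_add k hj, hshift,
    neg_div, ← sub_eq_add_neg]
  calc _ ≤ 2 * q / x ^ 2 :=
        abs_div_sub_div_add_le (abs_thueMorse k) (by positivity) (by positivity)
    _ ≤ _ := by gcongr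

lemma abs_sum_stutter_block_le (q k : ℕ) :
    |∑ j ∈ range (2 * q), stutter q (2 * q * k + j) / (2 * ((2 * q * k + j : ℕ) : ℝ) + 1)|
      ≤ 2 * q ^ 2 / ((k : ℝ) + 1) ^ 2 := by
  rw [sum_range_two_mul]
  calc _ ≤ ∑ _j ∈ range q, 2 * (q : ℝ) / ((k : ℝ) + 1) ^ 2 :=
        (abs_sum_le_sum_abs _ _).trans <|
          sum_le_sum fun _ hj => abs_stutter_pair_le k (mem_range.1 hj)
    _ = _ := by rw [sum_const, card_range, nsmul_eq_mul]; ring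

theorem exists_tendsto_sum_stutter_div {q : ℕ} (hq : 0 < q) :
    ∃ s, Tendsto (fun N => ∑ n ∈ range N, stutter q n / (2 * n + 1)) atTop (𝓝 s) := by
  refine ⟨_, tendsto_sum_range_of_summable_blocks (m := 2 * q) (by positivity) ?_ ?_⟩
  · refine squeeze_zero_norm (fun n => ?_) tendsto_one_div_add_atTop_nhds_zero_nat
    rw [Real.norm_eq_abs, abs_stutter_div]
    gcongr; linarith [n.cast_nonneg (α := ℝ)]
  · refine .of_norm_bounded (summable_one_div_nat_add_one_sq.mul_left (2 * (q : ℝ) ^ 2))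
      fun k => ?_
    rw [Real.norm_eq_abs, mul_one_div]
    exact abs_sum_stutter_block_le q k

lemma one_add_stutter_div_pos (q n : ℕ) : 0 < 1 + stutter q n / (2 * n + 1) := by
  rcases n with _ | n
  · norm_num [stutter_zero]
  · have ht : -1 ≤ stutter q (n + 1) := neg_le_of_abs_le (abs_stutter q _).le
    have hden : 1 < 2 * ((n + 1 : ℕ) : ℝ) + 1 := by push_cast; linarith [n.cast_nonneg (α := ℝ)]
    have : -1 < stutter q (n + 1) / (2 * ((n + 1 : ℕ) : ℝ) + 1) := by
      rw [lt_div_iff₀ (by linarith)]; linarith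
    linarith

theorem exists_pos_tendsto_prod_stutter {q : ℕ} (hq : 0 < q) :
    ∃ P, 0 < P ∧
      Tendsto (fun N => ∏ n ∈ range N, (1 + stutter q n / (2 * n + 1))) atTop (𝓝 P) := by
  obtain ⟨s, hs⟩ := exists_tendsto_sum_stutter_div hq
  refine exists_pos_tendsto_prod_one_add (one_add_stutter_div_pos q) hs ?_
  refine .of_nonneg_of_le (fun _ => sq_nonneg _) (fun n => ?_) summable_one_div_nat_add_one_sq
  rw [← sq_abs, abs_stutter_div, div_pow, one_pow]
  gcongr; linarith [n.cast_nonneg (α := ℝ)]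

noncomputable def sqrtTwoWallisProd (N : ℕ) : ℝ :=
  ∏ m ∈ range N, (4 * (m : ℝ) + 2) ^ 2 / ((4 * m + 1) * (4 * m + 3))

lemma sqrtTwoWallisProd_succ (N : ℕ) : sqrtTwoWallisProd (N + 1) =
    sqrtTwoWallisProd N * ((4 * (N : ℝ) + 2) ^ 2 / ((4 * N + 1) * (4 * N + 3))) :=
  prod_range_succ _ _

lemma GammaSeq_quarter_ratio_eq {n : ℕ} (hn : 0 < n) :
    GammaSeq (1 / 4) n * GammaSeq (3 / 4) n / GammaSeq (1 / 2) n ^ 2 =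
      sqrtTwoWallisProd (n + 1) := by
  have hn' : (0 : ℝ) < n := by exact_mod_cast hn
  have hpow : (n : ℝ) ^ (1 / 4 : ℝ) * (n : ℝ) ^ (3 / 4 : ℝ) = ((n : ℝ) ^ (1 / 2 : ℝ)) ^ 2 := by
    rw [← rpow_add hn', ← rpow_natCast, ← rpow_mul hn'.le]; norm_num
  have hfactor (m : ℕ) : (4 * (m : ℝ) + 2) ^ 2 / ((4 * m + 1) * (4 * m + 3)) =
      (1 / 2 + m) ^ 2 / ((1 / 4 + m) * (3 / 4 + m)) := by
    field_simp; ring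
  simp only [GammaSeq, sqrtTwoWallisProd, hfactor, prod_div_distrib, prod_pow, prod_mul_distrib]
  have hsqrt : 0 < (n : ℝ) ^ (1 / 2 : ℝ) := rpow_pos_of_pos hn' _
  field_simp
  rw [hpow]

lemma Gamma_one_fourth_mul_Gamma_three_fourths_div_sq :
    Gamma (1 / 4) * Gamma (3 / 4) / Gamma (1 / 2) ^ 2 = √2 := by
  have hreflect := Gamma_mul_Gamma_one_sub (1 / 4)
  rw [show (1 : ℝ) - 1 / 4 = 3 / 4 by norm_num, show π * (1 / 4) = π / 4 by ring,
    sin_pi_div_four] at hreflect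
  rw [hreflect, Gamma_one_half_eq, sq_sqrt pi_pos.le]
  have hsqrt2 : 0 < √2 := by positivity
  field_simp
  rw [sq_sqrt zero_le_two]

theorem tendsto_sqrtTwoWallisProd : Tendsto sqrtTwoWallisProd atTop (𝓝 √2) := by
  have hGamma := ((GammaSeq_tendsto_Gamma (1 / 4)).mul (GammaSeq_tendsto_Gamma (3 / 4))).div
    ((GammaSeq_tendsto_Gamma (1 / 2)).pow 2) (by rw [Gamma_one_half_eq]; positivity)
  rw [Gamma_one_fourth_mul_Gamma_three_fourths_div_sq] at hGamma
  refine (tendsto_add_atTop_iff_nat 1).1 (hGamma.congr' ?_)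
  filter_upwards [eventually_gt_atTop 0] with n hn using GammaSeq_quarter_ratio_eq hn

lemma one_add_div_mul_one_add_div {t x : ℝ} (ht : t ^ 2 = 1) (hx : 0 ≤ x) :
    (1 + t / (4 * x + 1)) * (1 + t / (4 * x + 3)) =
      (1 + t / (2 * x + 1)) * ((4 * x + 2) ^ 2 / ((4 * x + 1) * (4 * x + 3))) := by
  have h1 : 0 < 4 * x + 1 := by linarith
  have h2 : 0 < 2 * x + 1 := by linarith
  have h3 : 0 < 4 * x + 3 := by linarith
  field_simp
  linear_combination (2 * x + 1) * ht

theorem prod_stutter_two_mul_range_two_mul (q N : ℕ) :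
    ∏ n ∈ range (2 * N), (1 + stutter (2 * q) n / (2 * n + 1)) =
      (∏ n ∈ range N, (1 + stutter q n / (2 * n + 1))) * sqrtTwoWallisProd N := by
  induction N with
  | zero => simp [sqrtTwoWallisProd]
  | succ N ih =>
    rw [mul_add_one, prod_range_succ, prod_range_succ, ih, stutter_two_mul_two_mul,
      stutter_two_mul_two_mul_add_one, prod_range_succ, sqrtTwoWallisProd_succ]
    push_cast
    rw [show 2 * (2 * (N : ℝ)) + 1 = 4 * N + 1 by ring,
      show 2 * (2 * (N : ℝ) + 1) + 1 = 4 * N + 3 by ring, mul_assoc,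
      one_add_div_mul_one_add_div (t := stutter q N) (thueMorse_sq _) N.cast_nonneg]
    ring

theorem stuttered_product_ratio (q : ℕ) (hq : 1 ≤ q) :
    ∃ I1 I2 : ℝ, I1 ≠ 0 ∧ I2 ≠ 0 ∧
      Filter.Tendsto
        (fun N => ∏ n ∈ Finset.range N, (1 + stutter q n / (2 * n + 1)))
        Filter.atTop (nhds I1) ∧
      Filter.Tendsto
        (fun N => ∏ n ∈ Finset.range N, (1 + stutter (2 * q) n / (2 * n + 1)))
        Filter.atTop (nhds I2) ∧
      I2 / I1 = Real.sqrt 2 := by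
  obtain ⟨I1, hI1, hP⟩ := exists_pos_tendsto_prod_stutter hq
  obtain ⟨I2, hI2, hQ⟩ := exists_pos_tendsto_prod_stutter (q := 2 * q) (by omega)
  refine ⟨I1, I2, hI1.ne', hI2.ne', hP, hQ, ?_⟩
  have hEven : Tendsto (fun N => ∏ n ∈ range (2 * N), (1 + stutter (2 * q) n / (2 * n + 1)))
      atTop (𝓝 I2) := hQ.comp (tendsto_id.nsmul_atTop two_pos)
  have hI2_eq : I2 = I1 * √2 := tendsto_nhds_unique
    (hEven.congr (prod_stutter_two_mul_range_two_mul q)) (hP.mul tendsto_sqrtTwoWallisProd)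
  rw [hI2_eq, mul_div_cancel_left₀ _ hI1.ne']
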